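/- arXiv:2103.05492 — 3 statements merged into one kernel-verified Lean document; each statement's English description precedes it below -/
import Mathlib

section
/- Let k = (k_1,…,k_r) and l = (l_1,…,l_s) be indices, z = (z_1,…,z_r) ∈ 𝔻^r and w = (w_1,…,w_s) ∈ 𝔻^s. Assume that if both k and l are non-admissible (i.e., k_r = 1 and l_s = 1) then |z_r| < 1 or |w_s| < 1. Then the series defining Z_1(z/k | w/l) converges absolutely; moreover, in the case l = (1) and w = (1) one has Z_1(z/k) = Li^sh_k(z). -/
open scoped BigOperators

noncomputable section

namespace MCS

/-- An index is a tuple of positive integers. -/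
def IsIndex (k : List ℕ) : Prop := ∀ a ∈ k, 1 ≤ a

/-- An index is admissible if it is empty or its last entry is at least 2. -/
def Adm (k : List ℕ) : Prop := ∀ a, k.getLast? = some a → 2 ≤ a

/-- All entries of the tuple lie in the closed unit disk 𝔻. -/
def InDisk (z : List ℂ) : Prop := ∀ u ∈ z, ‖u‖ ≤ 1

/-- Partial sums of a tuple of gaps: `psum g i = g 0 + ⋯ + g i`. -/
def psum {r : ℕ} (g : Fin r → ℕ) (i : Fin r) : ℕ := ∑ j ∈ Finset.Iic i, g j

/-- The shuffle-type multiple polylogarithm `Li^sh_k(z)`, written as a sum over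
the gaps `g i = m_i - m_{i-1} ≥ 1`, so that `m_i = psum g i`. -/
def LiSh (k : List ℕ) (z : List ℂ) : ℂ :=
  ∑' g : Fin k.length → ℕ+,
    ∏ i : Fin k.length,
      (z.getD i.val 0) ^ ((g i : ℕ)) /
        ((psum (fun j => (g j : ℕ)) i : ℕ) : ℂ) ^ (k.get i)

/-- The term of the multivariable connected sum
`Z_n(z_1/k_1; … ; z_n/k_n | w/l)`, parametrized by the gaps
`g j i = m_i^{(j)} - m_{i-1}^{(j)} ≥ 1` and the gaps `c i = q_i - q_{i-1} ≥ 0`. -/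
def connTerm (n : ℕ) (k : Fin n → List ℕ) (z : Fin n → List ℂ)
    (l : List ℕ) (w : List ℂ)
    (g : (j : Fin n) → (Fin (k j).length → ℕ+)) (c : Fin l.length → ℕ) : ℂ :=
  -- the connector C(m_{r_1}^{(1)}, …, m_{r_n}^{(n)})
  (((∏ j, (∑ i, (g j i : ℕ)).factorial : ℕ) : ℂ) /
      (((∑ j, ∑ i, (g j i : ℕ)).factorial : ℕ) : ℂ))
  -- ∏_j ∏_i (z_i^{(j)})^{m_i^{(j)}-m_{i-1}^{(j)}} / (m_i^{(j)})^{k_i^{(j)}}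
  * (∏ j, ∏ i, ((z j).getD i.val 0) ^ ((g j i : ℕ)) /
      ((psum (fun i' => (g j i' : ℕ)) i : ℕ) : ℂ) ^ ((k j).get i))
  -- q_s ∏_i w_i^{q_i - q_{i-1}} / q_i^{l_i}
  * ((∑ i, c i : ℕ) : ℂ)
  * ∏ i, (w.getD i.val 0) ^ (c i) / ((psum c i : ℕ) : ℂ) ^ (l.get i)

/-- The domain of summation of the multivariable connected sum: for each `j`, the
positive gaps of `0 = m_0^{(j)} < m_1^{(j)} < ⋯`, and the gaps of
`q_0 = 0 < q_1 ≤ ⋯ ≤ q_s`, subject to `q_s = m_{r_1}^{(1)} + ⋯ + m_{r_n}^{(n)}`. -/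
def connDom (n : ℕ) (k : Fin n → List ℕ) (l : List ℕ) : Type :=
  { p : ((j : Fin n) → (Fin (k j).length → ℕ+)) × (Fin l.length → ℕ) //
    (∀ h : 0 < l.length, 1 ≤ p.2 ⟨0, h⟩) ∧
      (∑ i, p.2 i) = ∑ j, ∑ i, (p.1 j i : ℕ) }

/-- The multivariable connected sum `Z_n(z_1/k_1; … ; z_n/k_n | w/l)`. -/
def connZ (n : ℕ) (k : Fin n → List ℕ) (z : Fin n → List ℂ)
    (l : List ℕ) (w : List ℂ) : ℂ :=
  ∑' p : connDom n k l, connTerm n k z l w p.1.1 p.1.2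

/-- The arrow operation `k ↦ k_↑` on indices. -/
def upA : List ℕ → List ℕ
  | [] => []
  | [a] => [a + 1]
  | a :: b :: t => a :: upA (b :: t)

/-- The index part of the arrow operation `(z/k) ↦ (z/k)_{→v}` (for `v = 0` this is `↑`). -/
def arrK (k : List ℕ) (v : ℂ) : List ℕ := if v = 0 then upA k else k ++ [1]

/-- The variable part of the arrow operation `(z/k) ↦ (z/k)_{→v}`. -/
def arrZ (z : List ℂ) (v : ℂ) : List ℂ := if v = 0 then z else z ++ [v]

/-- The word (in `y = true`, `x = false`) associated with an index. -/
def toWord (k : List ℕ) : List Bool := k.flatMap (fun a => true :: List.replicate (a - 1) false)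

/-- Parsing a word back into an index. -/
def wparse : List Bool → List ℕ
  | [] => []
  | true :: rest => 1 :: wparse rest
  | false :: rest =>
    match wparse rest with
    | [] => []
    | a :: t => (a + 1) :: t

/-- The dual index `k†` of an admissible index `k`. -/
def dagger (k : List ℕ) : List ℕ := (wparse ((toWord k).map (fun b => !b))).reverse

end MCS


end

open MCS

/-!
Grouping the terms of `Z_1(z/k | w/l)` by `M = m_r = q_s`, the block of index `M` is at most
`M · S_{k,z}(M) · S_{l,w}(M)`, where `S_{k,z}(M)` (`sideSum`) sums
`∏ |z_i| ^ (m_i - m_{i-1}) / m_i ^ k_i` over `0 ≤ m_1 ≤ ⋯ ≤ m_r = M`. Bounding every factor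
but the last by `1 / m_i` gives `S_{k,z}(M) ≤ H_M ^ r / M`. If `k_r ≥ 2` the last factor is at
most `1 / M ^ 2`; if `|z_r| = θ < 1`, the weight `θ ^ (M - m_{r-1})` makes the sum over
`m_{r-1}` of `1 / m_{r-1}` of order `1 / M`. By hypothesis one of the two sides is of this
strong kind, so the block is `O(H_M ^ (r + s) / M ^ 2)`, which is summable because
`H_M = O(log M)`. For `l = (1)`, `w = (1)` the index `q` is forced to be `(m_r)` and the
factor `q_s / q_1` is `1`.
-/

open Finset

namespace MCS

section PartialSums

variable {t : ℕ}

theorem psum_le_sum (a : Fin t → ℕ) (i : Fin t) : psum a i ≤ ∑ j, a j :=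
  sum_le_sum_of_subset (subset_univ _)

theorem psum_zero {n : ℕ} (a : Fin (n + 1) → ℕ) : psum a 0 = a 0 := by
  rw [psum, ← bot_eq_zero, Iic_bot, sum_singleton]

theorem psum_last {n : ℕ} (a : Fin (n + 1) → ℕ) : psum a (Fin.last n) = ∑ j, a j := by
  rw [psum, ← Fin.top_eq_last, Iic_top]

theorem psum_succ {n : ℕ} (a : Fin (n + 1) → ℕ) (i : Fin n) :
    psum a i.succ = psum a i.castSucc + a i.succ := by
  have : Iic i.succ = insert i.succ (Iic i.castSucc) := by
    ext j
    simp only [mem_Iic, mem_insert, Fin.le_def, Fin.ext_iff, Fin.val_succ, Fin.val_castSucc]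
    omega
  rw [psum, psum, this, sum_insert (by simp [Fin.le_def]), add_comm]

theorem psum_mem_range {M : ℕ} {a : Fin t → ℕ} (ha : a ∈ Nat.antidiagonalTuple t M)
    (i : Fin t) : psum a i ∈ range (M + 1) :=
  mem_range.2 (Nat.lt_succ_of_le ((psum_le_sum a i).trans (Nat.mem_antidiagonalTuple.1 ha).le))

theorem psum_injective : Function.Injective (psum (r := t)) := by
  intro a b h
  cases t with
  | zero => exact funext fun i => i.elim0
  | succ n =>
    funext i
    induction i using Fin.cases with
    | zero => simpa only [psum_zero] using congrFun h 0
    | succ i =>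
      have hs := congrFun h i.succ
      rw [psum_succ, psum_succ, congrFun h i.castSucc] at hs
      omega

theorem sum_le_prod_sum_of_le_prod_psum {A : Finset (Fin t → ℕ)} {S : Finset ℕ}
    (hS : ∀ a ∈ A, ∀ i, psum a i ∈ S) {G : (Fin t → ℕ) → ℝ} {F : Fin t → ℕ → ℝ}
    (hF : ∀ i j, 0 ≤ F i j) (hG : ∀ a ∈ A, G a ≤ ∏ i, F i (psum a i)) :
    ∑ a ∈ A, G a ≤ ∏ i, ∑ j ∈ S, F i j :=
  calc ∑ a ∈ A, G a ≤ ∑ a ∈ A, ∏ i, F i (psum a i) := sum_le_sum hG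
    _ = ∑ v ∈ A.image psum, ∏ i, F i (v i) :=
      (sum_image (f := fun v => ∏ i, F i (v i)) psum_injective.injOn).symm
    _ ≤ ∑ v ∈ Fintype.piFinset fun _ => S, ∏ i, F i (v i) :=
      sum_le_sum_of_subset_of_nonneg
        (image_subset_iff.2 fun a ha => Fintype.mem_piFinset.2 (hS a ha))
        (fun _ _ _ => prod_nonneg fun _ _ => hF _ _)
    _ = ∏ i, ∑ j ∈ S, F i j := (prod_univ_sum _ _).symm

end PartialSums

theorem pow_div_natCast_pow_le_inv {x : ℝ} (hx0 : 0 ≤ x) (hx1 : x ≤ 1) (a p : ℕ) {e : ℕ}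
    (he : 1 ≤ e) : x ^ a / (p : ℝ) ^ e ≤ (p : ℝ)⁻¹ := by
  rcases Nat.eq_zero_or_pos p with rfl | hp
  · simp [zero_pow (by omega : e ≠ 0)]
  have hp1 : (1 : ℝ) ≤ p := by exact_mod_cast hp
  calc x ^ a / (p : ℝ) ^ e ≤ 1 / (p : ℝ) ^ e := by gcongr; exact pow_le_one₀ hx0 hx1
    _ ≤ (p : ℝ)⁻¹ := by
      rw [one_div]
      exact inv_anti₀ (by positivity) (le_self_pow₀ hp1 (by omega))

theorem sum_range_succ_inv_eq_harmonic (M : ℕ) :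
    ∑ j ∈ range (M + 1), (j : ℝ)⁻¹ = harmonic M := by
  rw [sum_range_succ', harmonic]
  push_cast
  simp

theorem harmonic_nonneg (M : ℕ) : (0 : ℝ) ≤ harmonic M :=
  sum_range_succ_inv_eq_harmonic M ▸ sum_nonneg fun _ _ => by positivity

theorem one_le_harmonic {M : ℕ} (hM : 1 ≤ M) : (1 : ℝ) ≤ harmonic M := by
  rw [← sum_range_succ_inv_eq_harmonic]
  simpa using single_le_sum (f := fun j : ℕ => (j : ℝ)⁻¹) (fun j _ => by positivity)
    (mem_range.2 (by omega : 1 < M + 1))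

theorem summable_harmonic_pow_div_sq (p : ℕ) :
    Summable fun M : ℕ => (harmonic M : ℝ) ^ p / (M : ℝ) ^ 2 := by
  set ε : ℝ := 1 / (2 * (p + 1))
  have hε : 0 < ε := by positivity
  have hεp : ε * p - 2 < -1 := by
    have : ε * p < 1 := by
      rw [div_mul_eq_mul_div, one_mul, div_lt_one (by positivity)]
      linarith
    linarith
  refine .of_nonneg_of_le (fun M => by have := harmonic_nonneg M; positivity) (fun M => ?_)
    ((Real.summable_nat_rpow.2 hεp).mul_left ((1 + ε⁻¹) ^ p))
  rcases Nat.eq_zero_or_pos M with rfl | hM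
  · simp [Real.zero_rpow (by linarith : ε * p - 2 ≠ 0)]
  have hM0 : (0 : ℝ) < M := by exact_mod_cast hM
  have hMε : 1 ≤ (M : ℝ) ^ ε := Real.one_le_rpow (by exact_mod_cast hM) hε.le
  have hH : (harmonic M : ℝ) ≤ (1 + ε⁻¹) * (M : ℝ) ^ ε :=
    calc (harmonic M : ℝ) ≤ 1 + Real.log M := harmonic_le_one_add_log M
      _ ≤ (M : ℝ) ^ ε + (M : ℝ) ^ ε / ε := add_le_add hMε (Real.log_le_rpow_div hM0.le hε)
      _ = (1 + ε⁻¹) * (M : ℝ) ^ ε := by ring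
  calc (harmonic M : ℝ) ^ p / (M : ℝ) ^ 2 ≤ ((1 + ε⁻¹) * (M : ℝ) ^ ε) ^ p / (M : ℝ) ^ 2 := by
        have := harmonic_nonneg M
        gcongr
    _ = (1 + ε⁻¹) ^ p * (M : ℝ) ^ (ε * p - 2) := by
        rw [mul_pow, Real.rpow_sub hM0, ← Real.rpow_mul_natCast hM0.le, Real.rpow_two,
          mul_div_assoc]

noncomputable def geomConv (θ : ℝ) (M : ℕ) : ℝ :=
  ∑ j ∈ range (M + 1), θ ^ (M - j) * (j : ℝ)⁻¹

theorem geomConv_one (M : ℕ) : geomConv 1 M = harmonic M := by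
  simp [geomConv, sum_range_succ_inv_eq_harmonic]

theorem geomConv_nonneg {θ : ℝ} (hθ : 0 ≤ θ) (M : ℕ) : 0 ≤ geomConv θ M :=
  sum_nonneg fun _ _ => by positivity

theorem summable_succ_mul_geometric {θ : ℝ} (h0 : 0 ≤ θ) (h1 : θ < 1) :
    Summable fun d : ℕ => ((d : ℝ) + 1) * θ ^ d := by
  have hθ : ‖θ‖ < 1 := by rwa [Real.norm_of_nonneg h0]
  simpa [add_mul] using
    (hasSum_coe_mul_geometric_of_norm_lt_one hθ).summable.add (summable_geometric_of_lt_one h0 h1)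

theorem geomConv_le {θ : ℝ} (h0 : 0 ≤ θ) (h1 : θ < 1) (M : ℕ) :
    geomConv θ M ≤ (∑' d : ℕ, ((d : ℝ) + 1) * θ ^ d) / M := by
  rcases Nat.eq_zero_or_pos M with rfl | hM
  · simp [geomConv]
  have hMR : (0 : ℝ) < M := by exact_mod_cast hM
  -- `M ≤ j (M - j + 1)` for `1 ≤ j ≤ M` trades the weight `1 / j` for `(M - j + 1) / M`
  have hterm : ∀ j ∈ range (M + 1),
      θ ^ (M - j) * (j : ℝ)⁻¹ ≤ (((M - j : ℕ) : ℝ) + 1) * θ ^ (M - j) / M := by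
    intro j hj
    rcases Nat.eq_zero_or_pos j with rfl | hj0
    · simp only [Nat.cast_zero, inv_zero, mul_zero]
      positivity
    have hjM : j ≤ M := Nat.lt_succ_iff.1 (mem_range.1 hj)
    have hkey : (M : ℝ) ≤ (((M - j : ℕ) : ℝ) + 1) * j := by
      have : M ≤ (M - j + 1) * j := by nlinarith [Nat.sub_add_cancel hjM]
      exact_mod_cast this
    rw [le_div_iff₀ hMR]
    calc θ ^ (M - j) * (j : ℝ)⁻¹ * M
        ≤ θ ^ (M - j) * (j : ℝ)⁻¹ * ((((M - j : ℕ) : ℝ) + 1) * j) := by gcongr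
      _ = (((M - j : ℕ) : ℝ) + 1) * θ ^ (M - j) := by field_simp
  calc geomConv θ M ≤ ∑ j ∈ range (M + 1), (((M - j : ℕ) : ℝ) + 1) * θ ^ (M - j) / M :=
        sum_le_sum hterm
    _ = (∑ d ∈ range (M + 1), ((d : ℝ) + 1) * θ ^ d) / M := by
        rw [← sum_div]
        simpa using congrArg (· / (M : ℝ))
          (sum_range_reflect (fun d : ℕ => ((d : ℝ) + 1) * θ ^ d) (M + 1))
    _ ≤ (∑' d : ℕ, ((d : ℝ) + 1) * θ ^ d) / M := by
        gcongr
        exact (summable_succ_mul_geometric h0 h1).sum_le_tsum _ fun d _ => by positivity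

section Side

variable {t : ℕ}

noncomputable def sideTerm (e : Fin t → ℕ) (ζ : Fin t → ℝ) (a : Fin t → ℕ) : ℝ :=
  ∏ i, ζ i ^ a i / (psum a i : ℝ) ^ e i

noncomputable def sideSum (e : Fin t → ℕ) (ζ : Fin t → ℝ) (M : ℕ) : ℝ :=
  ∑ a ∈ Nat.antidiagonalTuple t M, sideTerm e ζ a

variable {e : Fin t → ℕ} {ζ : Fin t → ℝ}

theorem sideTerm_nonneg (hζ0 : ∀ i, 0 ≤ ζ i) (a : Fin t → ℕ) : 0 ≤ sideTerm e ζ a :=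
  prod_nonneg fun i _ => by have := hζ0 i; positivity

theorem sideSum_nonneg (hζ0 : ∀ i, 0 ≤ ζ i) (M : ℕ) : 0 ≤ sideSum e ζ M :=
  sum_nonneg fun a _ => sideTerm_nonneg hζ0 a

theorem sideSum_fin_one (e : Fin 1 → ℕ) (ζ : Fin 1 → ℝ) (M : ℕ) :
    sideSum e ζ M = ζ 0 ^ M / (M : ℝ) ^ e 0 := by
  simp [sideSum, sideTerm, Nat.antidiagonalTuple_one, psum_zero]

/-- Weights dominating `sideTerm`, as functions of the partial sums: the penultimate partial sum
`m` carries `θ ^ (M - m)`, absorbing the factor `ζ_last ^ (M - m)` of the last variable. -/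
noncomputable def coupledWeight (n : ℕ) (θ : ℝ) (M E : ℕ) : Fin (n + 2) → ℕ → ℝ :=
  Fin.snoc (α := fun _ => ℕ → ℝ)
    (Fin.snoc (α := fun _ => ℕ → ℝ) (fun _ j => (j : ℝ)⁻¹) fun j => θ ^ (M - j) * (j : ℝ)⁻¹)
    fun j => if j = M then ((M : ℝ) ^ E)⁻¹ else 0

theorem coupledWeight_nonneg {n : ℕ} {θ : ℝ} (hθ : 0 ≤ θ) (M E : ℕ) (i : Fin (n + 2))
    (j : ℕ) : 0 ≤ coupledWeight n θ M E i j := by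
  induction i using Fin.lastCases with
  | last => simp only [coupledWeight, Fin.snoc_last]; split_ifs <;> positivity
  | cast i =>
    induction i using Fin.lastCases with
    | last => simp only [coupledWeight, Fin.snoc_castSucc, Fin.snoc_last]; positivity
    | cast i => simp only [coupledWeight, Fin.snoc_castSucc]; positivity

theorem prod_sum_coupledWeight (n : ℕ) (θ : ℝ) (M E : ℕ) :
    ∏ i, ∑ j ∈ range (M + 1), coupledWeight n θ M E i j
      = harmonic M ^ n * geomConv θ M / (M : ℝ) ^ E := by
  simp [coupledWeight, Fin.prod_univ_castSucc, sum_range_succ_inv_eq_harmonic, geomConv,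
    div_eq_mul_inv]

theorem sideTerm_le_prod_coupledWeight {n : ℕ} {e : Fin (n + 2) → ℕ} {ζ : Fin (n + 2) → ℝ}
    (he : ∀ i, 1 ≤ e i) (hζ0 : ∀ i, 0 ≤ ζ i) (hζ1 : ∀ i, ζ i ≤ 1) {θ : ℝ}
    (hθ : ζ (Fin.last (n + 1)) ≤ θ) {M : ℕ} {a : Fin (n + 2) → ℕ} (ha : ∑ i, a i = M) :
    sideTerm e ζ a ≤ ∏ i, coupledWeight n θ M (e (Fin.last (n + 1))) i (psum a i) := by
  have hsum : psum a (Fin.last (n + 1)) = M := (psum_last a).trans ha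
  have hgap : a (Fin.last (n + 1)) = M - psum a (Fin.last n).castSucc := by
    have : M = psum a (Fin.last n).castSucc + a (Fin.last (n + 1)) := by
      rw [← hsum, ← Fin.succ_last, psum_succ]
    omega
  have hx : ∀ i, ζ i ^ a i / (psum a i : ℝ) ^ e i ≤ (psum a i : ℝ)⁻¹ := fun i =>
    pow_div_natCast_pow_le_inv (hζ0 i) (hζ1 i) _ _ (he i)
  have hx0 : ∀ i, 0 ≤ ζ i ^ a i / (psum a i : ℝ) ^ e i := fun i => by
    have := hζ0 i
    positivity
  have hlast : ζ (Fin.last (n + 1)) ^ a (Fin.last (n + 1)) / (M : ℝ) ^ e (Fin.last (n + 1))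
      ≤ θ ^ (M - psum a (Fin.last n).castSucc) * ((M : ℝ) ^ e (Fin.last (n + 1)))⁻¹ := by
    rw [hgap, div_eq_mul_inv]
    gcongr
    exact hζ0 _
  rw [sideTerm, Fin.prod_univ_castSucc, Fin.prod_univ_castSucc]
  simp only [coupledWeight, Fin.prod_univ_castSucc, Fin.snoc_castSucc, Fin.snoc_last, hsum,
    if_true]
  calc _ ≤ (∏ i : Fin n, (psum a i.castSucc.castSucc : ℝ)⁻¹) *
        (psum a (Fin.last n).castSucc : ℝ)⁻¹ *
        (θ ^ (M - psum a (Fin.last n).castSucc) * ((M : ℝ) ^ e (Fin.last (n + 1)))⁻¹) :=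
        mul_le_mul (mul_le_mul (prod_le_prod (fun _ _ => hx0 _) fun _ _ => hx _) (hx _) (hx0 _)
          (prod_nonneg fun _ _ => by positivity)) hlast (hsum ▸ hx0 _) (by positivity)
    _ = _ := by ring

theorem sideSum_fin_add_two_le {n : ℕ} {e : Fin (n + 2) → ℕ} {ζ : Fin (n + 2) → ℝ}
    (he : ∀ i, 1 ≤ e i) (hζ0 : ∀ i, 0 ≤ ζ i) (hζ1 : ∀ i, ζ i ≤ 1) {θ : ℝ}
    (hθ : ζ (Fin.last (n + 1)) ≤ θ) (M : ℕ) :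
    sideSum e ζ M ≤ harmonic M ^ n * geomConv θ M / (M : ℝ) ^ e (Fin.last (n + 1)) :=
  prod_sum_coupledWeight n θ M _ ▸ sum_le_prod_sum_of_le_prod_psum (fun _ => psum_mem_range)
    (coupledWeight_nonneg ((hζ0 _).trans hθ) M _)
    fun _ ha => sideTerm_le_prod_coupledWeight he hζ0 hζ1 hθ (Nat.mem_antidiagonalTuple.1 ha)

theorem sideSum_le_harmonic_pow_mul_geomConv {n : ℕ} {e : Fin (n + 1) → ℕ}
    {ζ : Fin (n + 1) → ℝ} (he : ∀ i, 1 ≤ e i) (hζ0 : ∀ i, 0 ≤ ζ i) (hζ1 : ∀ i, ζ i ≤ 1)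
    {θ : ℝ} (hθ : ζ (Fin.last n) ≤ θ) (hθ1 : θ ≤ 1) {M : ℕ} (hM : 1 ≤ M) :
    sideSum e ζ M ≤ harmonic M ^ n * geomConv θ M / (M : ℝ) ^ e (Fin.last n) := by
  have hθ0 : 0 ≤ θ := (hζ0 _).trans hθ
  cases n with
  | zero =>
    rw [sideSum_fin_one, pow_zero, one_mul, Fin.last_zero]
    gcongr
    calc ζ 0 ^ M ≤ θ ^ M := pow_le_pow_left₀ (hζ0 0) hθ M
      _ ≤ θ ^ (M - 1) * ((1 : ℕ) : ℝ)⁻¹ := by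
          simpa using pow_le_pow_of_le_one hθ0 hθ1 (Nat.sub_le M 1)
      _ ≤ geomConv θ M :=
          single_le_sum (f := fun j => θ ^ (M - j) * (j : ℝ)⁻¹) (fun _ _ => by positivity)
            (mem_range.2 (by omega))
  | succ n =>
    calc sideSum e ζ M ≤ harmonic M ^ n * geomConv θ M / (M : ℝ) ^ e (Fin.last (n + 1)) :=
          sideSum_fin_add_two_le he hζ0 hζ1 hθ M
      _ ≤ harmonic M ^ (n + 1) * geomConv θ M / (M : ℝ) ^ e (Fin.last (n + 1)) := by
          have := geomConv_nonneg hθ0 M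
          gcongr
          · exact one_le_harmonic hM
          · omega

theorem sideSum_le_harmonic_pow_div (he : ∀ i, 1 ≤ e i) (hζ0 : ∀ i, 0 ≤ ζ i) (hζ1 : ∀ i, ζ i ≤ 1)
    {M : ℕ} (hM : 1 ≤ M) : sideSum e ζ M ≤ harmonic M ^ t / M := by
  cases t with
  | zero =>
    obtain ⟨M, rfl⟩ := Nat.exists_eq_add_of_le' hM
    simp only [sideSum, Nat.antidiagonalTuple_zero_succ, sum_empty, pow_zero]
    positivity
  | succ n =>
    calc sideSum e ζ M ≤ harmonic M ^ n * geomConv 1 M / (M : ℝ) ^ e (Fin.last n) :=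
          sideSum_le_harmonic_pow_mul_geomConv he hζ0 hζ1 (hζ1 _) le_rfl hM
      _ ≤ harmonic M ^ (n + 1) / M := by
          rw [geomConv_one, ← pow_succ]
          have := pow_nonneg (harmonic_nonneg M) (n + 1)
          gcongr
          exact le_self_pow₀ (by exact_mod_cast hM) (by have := he (Fin.last n); omega)

theorem exists_sideSum_le_harmonic_pow_div_sq (he : ∀ i, 1 ≤ e i) (hζ0 : ∀ i, 0 ≤ ζ i)
    (hζ1 : ∀ i, ζ i ≤ 1)
    (hlast : ∀ i : Fin t, (i : ℕ) + 1 = t → 2 ≤ e i ∨ ζ i < 1) :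
    ∃ C, ∀ M, 1 ≤ M → sideSum e ζ M ≤ C * harmonic M ^ t / (M : ℝ) ^ 2 := by
  cases t with
  | zero =>
    refine ⟨0, fun M hM => ?_⟩
    obtain ⟨M, rfl⟩ := Nat.exists_eq_add_of_le' hM
    simp [sideSum, Nat.antidiagonalTuple_zero_succ]
  | succ n =>
    rcases hlast (Fin.last n) rfl with hadm | hgeo
    · refine ⟨1, fun M hM => ?_⟩
      calc sideSum e ζ M ≤ harmonic M ^ n * geomConv 1 M / (M : ℝ) ^ e (Fin.last n) :=
            sideSum_le_harmonic_pow_mul_geomConv he hζ0 hζ1 (hζ1 _) le_rfl hM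
        _ ≤ 1 * harmonic M ^ (n + 1) / (M : ℝ) ^ 2 := by
            rw [geomConv_one, ← pow_succ, one_mul]
            have hM' : (1 : ℝ) ≤ M := by exact_mod_cast hM
            have := pow_nonneg (harmonic_nonneg M) (n + 1)
            gcongr
    · set θ := ζ (Fin.last n)
      set C := ∑' d : ℕ, ((d : ℝ) + 1) * θ ^ d
      have hC : 0 ≤ C := tsum_nonneg fun d => by have := hζ0 (Fin.last n); positivity
      refine ⟨C, fun M hM => ?_⟩
      have := pow_nonneg (harmonic_nonneg M) n
      calc sideSum e ζ M ≤ harmonic M ^ n * geomConv θ M / (M : ℝ) ^ e (Fin.last n) :=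
            sideSum_le_harmonic_pow_mul_geomConv he hζ0 hζ1 le_rfl (hζ1 _) hM
        _ ≤ harmonic M ^ n * (C / M) / (M : ℝ) ^ 1 := by
            gcongr
            · exact geomConv_le (hζ0 _) hgeo M
            · exact_mod_cast hM
            · exact he _
        _ = C * harmonic M ^ n / (M : ℝ) ^ 2 := by ring
        _ ≤ C * harmonic M ^ (n + 1) / (M : ℝ) ^ 2 := by
            gcongr
            exacts [one_le_harmonic hM, n.le_succ]

end Side

theorem natCast_mul_mul_le_harmonic_pow_div_sq {S₁ S₂ : ℕ → ℝ} {r s : ℕ} {C : ℝ}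
    (h₁0 : ∀ M, 0 ≤ S₁ M) (h₂0 : ∀ M, 0 ≤ S₂ M)
    (h₁ : ∀ M, 1 ≤ M → S₁ M ≤ C * harmonic M ^ r / (M : ℝ) ^ 2)
    (h₂ : ∀ M, 1 ≤ M → S₂ M ≤ harmonic M ^ s / M) (M : ℕ) :
    M * S₁ M * S₂ M ≤ C * harmonic M ^ (r + s) / (M : ℝ) ^ 2 := by
  rcases Nat.eq_zero_or_pos M with rfl | hM
  · simp
  calc M * S₁ M * S₂ M ≤ M * (C * harmonic M ^ r / (M : ℝ) ^ 2) * (harmonic M ^ s / M) :=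
        mul_le_mul (mul_le_mul_of_nonneg_left (h₁ M hM) M.cast_nonneg) (h₂ M hM) (h₂0 M)
          (mul_nonneg M.cast_nonneg ((h₁0 M).trans (h₁ M hM)))
    _ = C * harmonic M ^ (r + s) / (M : ℝ) ^ 2 := by
        have : (M : ℝ) ≠ 0 := by positivity
        field_simp
        ring

theorem summable_sideTerm_mul_sideTerm {r s : ℕ} {e₁ : Fin r → ℕ} {ζ₁ : Fin r → ℝ}
    {e₂ : Fin s → ℕ} {ζ₂ : Fin s → ℝ} (hζ₁ : ∀ i, 0 ≤ ζ₁ i) (hζ₂ : ∀ i, 0 ≤ ζ₂ i) {C : ℝ}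
    {p : ℕ} (hC : ∀ M, M * sideSum e₁ ζ₁ M * sideSum e₂ ζ₂ M ≤ C * harmonic M ^ p / (M : ℝ) ^ 2) :
    Summable fun x : Σ M, ↥(Nat.antidiagonalTuple r M ×ˢ Nat.antidiagonalTuple s M) =>
      sideTerm e₁ ζ₁ x.2.1.1 * x.1 * sideTerm e₂ ζ₂ x.2.1.2 := by
  have h0 : ∀ a c (M : ℕ), 0 ≤ sideTerm e₁ ζ₁ a * M * sideTerm e₂ ζ₂ c := fun a c M => by
    have := sideTerm_nonneg (e := e₁) hζ₁ a
    have := sideTerm_nonneg (e := e₂) hζ₂ c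
    positivity
  refine (summable_sigma_of_nonneg fun x => h0 _ _ _).2 ⟨fun M => .of_finite, ?_⟩
  refine .of_nonneg_of_le (fun M => tsum_nonneg fun _ => h0 _ _ _) (fun M => ?_)
    (((summable_harmonic_pow_div_sq p).mul_left C).congr fun M => (mul_div_assoc _ _ _).symm)
  refine le_of_eq_of_le ?_ (hC M)
  rw [Finset.tsum_subtype (Nat.antidiagonalTuple r M ×ˢ Nat.antidiagonalTuple s M)
    fun y => sideTerm e₁ ζ₁ y.1 * M * sideTerm e₂ ζ₂ y.2, sum_product, sideSum, sideSum,
    mul_assoc, sum_mul_sum, mul_sum]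
  refine sum_congr rfl fun a _ => ?_
  rw [mul_sum]
  exact sum_congr rfl fun c _ => by ring

section Lists

variable {k : List ℕ} {z : List ℂ}

theorem IsIndex.one_le_get (hk : IsIndex k) (i : Fin k.length) : 1 ≤ k.get i :=
  hk _ (List.get_mem k i)

theorem InDisk.norm_getD_le_one (hz : InDisk z) (i : ℕ) : ‖z.getD i 0‖ ≤ 1 := by
  rw [List.getD_eq_getElem?_getD]
  cases h : z[i]? with
  | none => simp
  | some u => exact hz u (List.mem_of_getElem? h)

theorem two_le_get_or_norm_getD_lt_one (hzlen : z.length = k.length)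
    (h : Adm k ∨ ∃ u, z.getLast? = some u ∧ ‖u‖ < 1) (i : Fin k.length)
    (hi : (i : ℕ) + 1 = k.length) : 2 ≤ k.get i ∨ ‖z.getD i 0‖ < 1 := by
  have hi' : (i : ℕ) = k.length - 1 := by omega
  rcases h with hadm | ⟨u, hu, hu1⟩
  · exact Or.inl (hadm _ (by simp [List.getLast?_eq_getElem?, ← hi']))
  · right
    rw [List.getLast?_eq_getElem?, hzlen, ← hi'] at hu
    simpa [List.getD_eq_getElem?_getD, hu] using hu1

theorem sideSum_get_le_harmonic_pow_div (hk : IsIndex k) (hz : InDisk z) {M : ℕ} (hM : 1 ≤ M) :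
    sideSum k.get (fun i => ‖z.getD i 0‖) M ≤ harmonic M ^ k.length / M :=
  sideSum_le_harmonic_pow_div hk.one_le_get (fun _ => norm_nonneg _)
    (fun _ => hz.norm_getD_le_one _) hM

theorem exists_sideSum_get_le_harmonic_pow_div_sq (hk : IsIndex k) (hz : InDisk z)
    (hzlen : z.length = k.length)
    (h : Adm k ∨ ∃ u, z.getLast? = some u ∧ ‖u‖ < 1) :
    ∃ C, ∀ M, 1 ≤ M →
      sideSum k.get (fun i => ‖z.getD i 0‖) M ≤ C * harmonic M ^ k.length / (M : ℝ) ^ 2 :=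
  exists_sideSum_le_harmonic_pow_div_sq hk.one_le_get (fun _ => norm_nonneg _)
    (fun _ => hz.norm_getD_le_one _)
    (two_le_get_or_norm_getD_lt_one hzlen h)

end Lists

section ConnectedSum

variable {k l : List ℕ} {z w : List ℂ}

theorem norm_connTerm_one (g : Fin 1 → Fin k.length → ℕ+) (c : Fin l.length → ℕ) :
    ‖connTerm 1 (fun _ => k) (fun _ => z) l w g c‖ =
      sideTerm k.get (fun i => ‖z.getD i 0‖) (fun i => g 0 i) * (∑ i, c i : ℕ)
        * sideTerm l.get (fun i => ‖w.getD i 0‖) c := by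
  simp only [connTerm, Fin.prod_univ_one, Fin.sum_univ_one]
  rw [div_self (Nat.cast_ne_zero.2 (Nat.factorial_ne_zero _)), one_mul, norm_mul, norm_mul,
    Complex.norm_natCast]
  simp only [sideTerm, norm_prod, norm_div, norm_pow, Complex.norm_natCast]

theorem exists_natCast_mul_sideSum_mul_sideSum_le (hk : IsIndex k) (hl : IsIndex l)
    (hzlen : z.length = k.length) (hwlen : w.length = l.length) (hzD : InDisk z) (hwD : InDisk w)
    (hconv : (¬ Adm k ∧ ¬ Adm l) →
      (∃ u, z.getLast? = some u ∧ ‖u‖ < 1) ∨ (∃ u, w.getLast? = some u ∧ ‖u‖ < 1)) :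
    ∃ C, ∀ M, M * sideSum k.get (fun i => ‖z.getD i 0‖) M * sideSum l.get (fun i => ‖w.getD i 0‖) M
      ≤ C * harmonic M ^ (k.length + l.length) / (M : ℝ) ^ 2 := by
  have hζz : ∀ i : Fin k.length, 0 ≤ ‖z.getD i 0‖ := fun _ => norm_nonneg _
  have hζw : ∀ i : Fin l.length, 0 ≤ ‖w.getD i 0‖ := fun _ => norm_nonneg _
  by_cases hks : Adm k ∨ ∃ u, z.getLast? = some u ∧ ‖u‖ < 1
  · obtain ⟨C, hC⟩ := exists_sideSum_get_le_harmonic_pow_div_sq hk hzD hzlen hks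
    exact ⟨C, natCast_mul_mul_le_harmonic_pow_div_sq (sideSum_nonneg hζz) (sideSum_nonneg hζw) hC
      fun M => sideSum_get_le_harmonic_pow_div hl hwD⟩
  · obtain ⟨hk', hz'⟩ := not_or.1 hks
    obtain ⟨C, hC⟩ := exists_sideSum_get_le_harmonic_pow_div_sq hl hwD hwlen <| by
      by_cases hl' : Adm l
      exacts [Or.inl hl', Or.inr ((hconv ⟨hk', hl'⟩).resolve_left hz')]
    refine ⟨C, fun M => ?_⟩
    rw [mul_right_comm, add_comm]
    exact natCast_mul_mul_le_harmonic_pow_div_sq (sideSum_nonneg hζw) (sideSum_nonneg hζz) hC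
      (fun M => sideSum_get_le_harmonic_pow_div hk hzD) M

theorem summable_norm_connTerm_one (hk : IsIndex k) (hl : IsIndex l)
    (hzlen : z.length = k.length) (hwlen : w.length = l.length) (hzD : InDisk z) (hwD : InDisk w)
    (hconv : (¬ Adm k ∧ ¬ Adm l) →
      (∃ u, z.getLast? = some u ∧ ‖u‖ < 1) ∨ (∃ u, w.getLast? = some u ∧ ‖u‖ < 1)) :
    Summable fun p : connDom 1 (fun _ => k) l =>
      ‖connTerm 1 (fun _ => k) (fun _ => z) l w p.1.1 p.1.2‖ := by
  obtain ⟨C, hC⟩ :=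
    exists_natCast_mul_sideSum_mul_sideSum_le hk hl hzlen hwlen hzD hwD hconv
  let ι : connDom 1 (fun _ => k) l →
      Σ M, ↥(Nat.antidiagonalTuple k.length M ×ˢ Nat.antidiagonalTuple l.length M) :=
    fun p => ⟨∑ i, p.1.2 i, ((fun i => p.1.1 0 i), p.1.2), by
      simpa [Nat.mem_antidiagonalTuple] using p.2.2.symm⟩
  have hι : Function.Injective ι := by
    rintro ⟨⟨g, c⟩, _⟩ ⟨⟨g', c'⟩, _⟩ h
    obtain ⟨hg, hc⟩ := Prod.ext_iff.1 (congrArg (fun x => x.2.1) h)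
    refine Subtype.ext (Prod.ext (funext fun j => funext fun i => ?_) hc)
    rw [Subsingleton.elim j 0]
    exact PNat.coe_injective (congrFun hg i)
  refine ((summable_sideTerm_mul_sideTerm (fun _ => norm_nonneg _) (fun _ => norm_nonneg _)
    hC).comp_injective hι).congr fun p => ?_
  exact (norm_connTerm_one _ _).symm

theorem connZ_one_eq_LiSh (hkne : k ≠ []) :
    connZ 1 (fun _ => k) (fun _ => z) [1] [1] = LiSh k z := by
  have hpos : ∀ g : Fin k.length → ℕ+, 1 ≤ ∑ i, (g i : ℕ) := fun g =>
    (g ⟨0, List.length_pos_iff.2 hkne⟩).pos.trans_le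
      (single_le_sum (f := fun i => (g i : ℕ)) (fun _ _ => Nat.zero_le _) (mem_univ _))
  let e : (Fin k.length → ℕ+) ≃ connDom 1 (fun _ => k) [1] :=
    { toFun := fun g => ⟨(fun _ => g, fun _ => ∑ i, (g i : ℕ)), fun _ => hpos g, by simp⟩
      invFun := fun p => p.1.1 0
      left_inv := fun _ => rfl
      right_inv := by
        rintro ⟨⟨g, c⟩, -, hc⟩
        refine Subtype.ext (Prod.ext (funext fun j => by rw [Subsingleton.elim j 0]) ?_)
        funext i
        obtain rfl : i = ⟨0, by simp⟩ := Subsingleton.elim (α := Fin 1) _ _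
        change ∑ i, (g 0 i : ℕ) = c _
        simpa using hc.symm }
  rw [connZ, LiSh, ← e.tsum_eq]
  refine tsum_congr fun g => ?_
  have hM : ∑ i, ((g i : ℕ) : ℂ) ≠ 0 := by
    exact_mod_cast Nat.pos_iff_ne_zero.1 (hpos g)
  change connTerm 1 (fun _ => k) (fun _ => z) [1] [1] (fun _ => g) (fun _ => ∑ i, (g i : ℕ)) = _
  simp [connTerm, psum_zero, Nat.factorial_ne_zero, hM]

end ConnectedSum

end MCS

/-- For indices `k = (k_1,…,k_r)`, `l = (l_1,…,l_s)` and variables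
`z ∈ 𝔻^r`, `w ∈ 𝔻^s`, if (`k` and `l` both non-admissible → `|z_r| < 1` or `|w_s| < 1`),
then the series defining `Z_1(z/k | w/l)` converges absolutely; moreover if `l = (1)`
and `w = (1)` then `Z_1(z/k) = Li^sh_k(z)`. -/
theorem stmt0 (k l : List ℕ) (z w : List ℂ)
    (hk : IsIndex k) (hl : IsIndex l)
    (hkne : k ≠ [])
    (hzlen : z.length = k.length) (hwlen : w.length = l.length)
    (hzD : InDisk z) (hwD : InDisk w)
    (hconv : (¬ Adm k ∧ ¬ Adm l) →
      (∃ u, z.getLast? = some u ∧ ‖u‖ < 1) ∨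
      (∃ u, w.getLast? = some u ∧ ‖u‖ < 1)) :
    Summable (fun p : connDom 1 (fun _ => k) l =>
      ‖connTerm 1 (fun _ => k) (fun _ => z) l w p.1.1 p.1.2‖) ∧
    (l = [1] → w = [1] →
      connZ 1 (fun _ => k) (fun _ => z) l w = LiSh k z) := by
  refine ⟨summable_norm_connTerm_one hk hl hzlen hwlen hzD hwD hconv, ?_⟩
  rintro rfl rfl
  exact connZ_one_eq_LiSh hkne
end

section
/- For every integer n ≥ 2 there exists a constant c > 0 such that for all integers N ≥ n, Σ_{(a_1,…,a_n) ∈ ℤ_{>0}^n, a_1+⋯+a_n = N} C(a_1,…,a_n)/(a_1⋯a_n) ≤ c/N². -/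
/-!
Since `a! = a (a - 1)!`, the summand equals `∏ (a_i - 1)! / N!`, and the shift `b_i = a_i - 1`
turns the sum into `(N!)⁻¹ ∑_{b_1 + ⋯ + b_n = N - n} ∏ b_i!`. Peeling off one coordinate at a
time and using `∑_{j + l = M} j! l! ≤ 3 M!` bounds the inner sum by `3ⁿ (N - n)!`, and for `n ≥ 2`
we have `(N - n)! ≤ (N - 2)! ≤ 2 N! / N²`.
-/

open Nat Finset

theorem Nat.factorial_succ_mul_factorial_succ_le (a b : ℕ) : (a + 1)! * (b + 1)! ≤ (a + b + 1)! := by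
  induction b with
  | zero => simp
  | succ b ih =>
    calc (a + 1)! * (b + 2)! = (b + 2) * ((a + 1)! * (b + 1)!) := by
          rw [factorial_succ (b + 1)]; ring
      _ ≤ (a + b + 2) * (a + b + 1)! := by gcongr; omega
      _ = (a + (b + 1) + 1)! := by
          rw [show a + (b + 1) + 1 = a + b + 1 + 1 by ring]; exact (factorial_succ _).symm

theorem Nat.factorial_sub_two_mul_sq_le (N : ℕ) : (N - 2)! * N ^ 2 ≤ 2 * N ! := by
  rcases N with _ | _ | m
  · simp
  · simp
  · rw [factorial_succ (m + 1), factorial_succ m, show m + 2 - 2 = m by omega]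
    have : (m + 2) ^ 2 ≤ 2 * ((m + 2) * (m + 1)) := by nlinarith
    nlinarith [factorial_pos m]

-- The two end terms give `2 M!`, each of the `M - 1` inner ones is at most `(M - 1)!`.
theorem Finset.Nat.sum_antidiagonal_factorial_mul_factorial_le (M : ℕ) :
    ∑ p ∈ antidiagonal M, p.1 ! * p.2 ! ≤ 3 * M ! := by
  rcases M with _ | _ | m
  · simp
  · simp [antidiagonal_succ]
  · rw [sum_antidiagonal_succ, sum_antidiagonal_succ']
    have hmiddle : ∑ p ∈ antidiagonal m, (p.1 + 1)! * (p.2 + 1)! ≤ (m + 1) * (m + 1)! := by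
      calc ∑ p ∈ antidiagonal m, (p.1 + 1)! * (p.2 + 1)!
          ≤ ∑ _p ∈ antidiagonal m, (m + 1)! := sum_le_sum fun p hp => by
            rw [← mem_antidiagonal.mp hp]; exact factorial_succ_mul_factorial_succ_le _ _
        _ = (m + 1) * (m + 1)! := by rw [sum_const, card_antidiagonal, smul_eq_mul]
    have hlt : (m + 1) * (m + 1)! ≤ (m + 1 + 1)! := by rw [factorial_succ (m + 1)]; gcongr; omega
    simp only [factorial_zero, one_mul, mul_one]
    omega

theorem Finset.Nat.sum_antidiagonalTuple_succ {β : Type*} [AddCommMonoid β] (k n : ℕ)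
    (f : (Fin (k + 1) → ℕ) → β) :
    ∑ x ∈ antidiagonalTuple (k + 1) n, f x =
      ∑ p ∈ antidiagonal n, ∑ x ∈ antidiagonalTuple k p.2, f (Fin.cons p.1 x) := by
  change ((↑(List.Nat.antidiagonalTuple (k + 1) n) : Multiset _).map f).sum =
    ((↑(List.Nat.antidiagonal n) : Multiset (ℕ × ℕ)).map fun p : ℕ × ℕ =>
      ((↑(List.Nat.antidiagonalTuple k p.2) : Multiset _).map fun x => f (Fin.cons p.1 x)).sum).sum
  simp [List.Nat.antidiagonalTuple, List.flatMap_def, List.sum_flatten, Function.comp_def]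

theorem Finset.Nat.sum_antidiagonalTuple_prod_factorial_le (k M : ℕ) :
    ∑ x ∈ antidiagonalTuple k M, ∏ i, (x i)! ≤ 3 ^ k * M ! := by
  induction k generalizing M with
  | zero => rcases M with _ | M <;> simp
  | succ k ih =>
    rw [sum_antidiagonalTuple_succ]
    simp only [Fin.prod_univ_succ, Fin.cons_zero, Fin.cons_succ, ← mul_sum]
    calc ∑ p ∈ antidiagonal M, p.1 ! * ∑ x ∈ antidiagonalTuple k p.2, ∏ i, (x i)!
        ≤ ∑ p ∈ antidiagonal M, p.1 ! * (3 ^ k * p.2 !) := by gcongr with p; exact ih p.2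
      _ = 3 ^ k * ∑ p ∈ antidiagonal M, p.1 ! * p.2 ! := by rw [mul_sum]; congr 1 with p; ring
      _ ≤ 3 ^ k * (3 * M !) := by gcongr; exact sum_antidiagonal_factorial_mul_factorial_le M
      _ = 3 ^ (k + 1) * M ! := by ring

theorem Finset.Nat.sum_filter_pos_antidiagonalTuple {β : Type*} [AddCommMonoid β] {k N : ℕ}
    (hkN : k ≤ N) (f : (Fin k → ℕ) → β) :
    ∑ a ∈ (antidiagonalTuple k N).filter (fun a => ∀ i, 0 < a i), f a =
      ∑ b ∈ antidiagonalTuple k (N - k), f (fun i => b i + 1) := by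
  symm
  refine sum_nbij' (fun b i => b i + 1) (fun a i => a i - 1) (fun b hb => ?_) (fun a ha => ?_)
    (fun b _ => rfl) (fun a ha => ?_) (fun _ _ => rfl)
  · simp only [mem_antidiagonalTuple, mem_filter] at hb ⊢
    simp [sum_add_distrib, hb, Nat.sub_add_cancel hkN]
  · simp only [mem_antidiagonalTuple, mem_filter] at ha ⊢
    have h : ∑ i, ((a i - 1) + 1) = ∑ i, a i :=
      sum_congr rfl fun i _ => Nat.sub_add_cancel (ha.2 i)
    simp only [sum_add_distrib, sum_const, card_univ, Fintype.card_fin, smul_eq_mul, mul_one] at h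
    omega
  · funext i
    exact Nat.sub_add_cancel ((mem_filter.mp ha).2 i)

theorem Nat.cast_prod_factorial_div_prod_cast {K ι : Type*} [Field K] [CharZero K] [Fintype ι]
    {a : ι → ℕ} (ha : ∀ i, 0 < a i) :
    ((∏ i, (a i)! : ℕ) : K) / ∏ i, (a i : K) = ((∏ i, (a i - 1)! : ℕ) : K) := by
  rw [div_eq_iff (prod_ne_zero_iff.mpr fun i _ => by exact_mod_cast (ha i).ne'), ← cast_prod,
    ← cast_mul, ← prod_mul_distrib]
  exact congrArg _ (prod_congr rfl fun i _ => by rw [mul_comm, mul_factorial_pred (ha i).ne'])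

/-- For every integer `n ≥ 2` there is a constant `c > 0` such that
for all `N ≥ n`,
`Σ_{a_1+⋯+a_n = N, a_i ≥ 1} C(a_1,…,a_n)/(a_1⋯a_n) ≤ c/N²`,
where `C(a_1,…,a_n) = a_1!⋯a_n!/(a_1+⋯+a_n)!`. -/
theorem stmt4 (n : ℕ) (hn : 2 ≤ n) :
    ∃ c : ℝ, 0 < c ∧ ∀ N : ℕ, n ≤ N →
      ∑ a ∈ (Finset.Nat.antidiagonalTuple n N).filter (fun a => ∀ i, 0 < a i),
        (((∏ i, (a i).factorial : ℕ) : ℝ) / (((∑ i, a i).factorial : ℕ) : ℝ)) /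
          (∏ i, (a i : ℝ))
        ≤ c / (N : ℝ) ^ 2 := by
  refine ⟨2 * 3 ^ n, by positivity, fun N hN => ?_⟩
  have hterm : ∀ a ∈ (Finset.Nat.antidiagonalTuple n N).filter (fun a => ∀ i, 0 < a i),
      ((∏ i, (a i)! : ℕ) : ℝ) / ((∑ i, a i)! : ℕ) / ∏ i, (a i : ℝ) =
        ((∏ i, (a i - 1)! : ℕ) : ℝ) / (N ! : ℕ) := fun a ha => by
    obtain ⟨hsum, hpos⟩ := mem_filter.mp ha
    rw [div_right_comm, Nat.cast_prod_factorial_div_prod_cast hpos,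
      Finset.Nat.mem_antidiagonalTuple.mp hsum]
  rw [sum_congr rfl hterm, ← sum_div, ← cast_sum, Finset.Nat.sum_filter_pos_antidiagonalTuple hN]
  simp only [add_tsub_cancel_right]
  have hbound : (∑ b ∈ Finset.Nat.antidiagonalTuple n (N - n), ∏ i, (b i)!) * N ^ 2 ≤
      2 * 3 ^ n * N ! := calc
    _ ≤ 3 ^ n * (N - n)! * N ^ 2 := by
      gcongr; exact Finset.Nat.sum_antidiagonalTuple_prod_factorial_le n (N - n)
    _ ≤ 3 ^ n * ((N - 2)! * N ^ 2) := by rw [mul_assoc]; gcongr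
    _ ≤ 3 ^ n * (2 * N !) := Nat.mul_le_mul_left _ (factorial_sub_two_mul_sq_le N)
    _ = 2 * 3 ^ n * N ! := by ring
  have hNpos : (0 : ℝ) < N := by exact_mod_cast (by omega : 0 < N)
  rw [div_le_div_iff₀ (by positivity) (by positivity)]
  exact_mod_cast hbound
end

section
/- ζ(4) = (8/17) · Σ_{m=1}^{∞} Σ_{n=1}^{∞} ((m−1)!·(n−1)!/(m+n)!) · Σ_{j=1}^{m+n} 1/j². Equivalently, Z_2(1;1 | 2,1) = (17/8)·ζ(4). -/
/-! Write `P a b = a! b! / (a + b + 2)!`, so that the double sum is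
`Σ_{a,b ≥ 0} P a b · H(a + b + 2)` with `H N = Σ_{j ≤ N} 1/j²`, and `B a b = a! b! / (a + b + 1)!`,
so that `B a b - B a (b + 1) = (a + 1) P a b` and `B a b = (a + b + 2) P a b`.
Telescoping `B a b · H(a + b + 1)` in `b` gives

  `Σ_b P a b · H(a + b + 2) = H(a + 1)/(a + 1)² + Σ_b P a b / ((a + 1)(a + b + 2))`.

The first part sums over `a` to `Σ_n H(n)/n² = (ζ(2)² + ζ(4))/2`. Since
`1/((a + 1)(a + b + 2)) + 1/((b + 1)(a + b + 2)) = 1/((a + 1)(b + 1))`, the second part is half of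
`Σ_{a,b} P a b / ((a + 1)(b + 1))`, and the recursion `(a + b + 3) P (a + 1) b = (a + 1) P a b`
gives `Σ_b P a b / (b + 1) = (ζ(2) - H(a + 1))/(a + 1)`, so that half is `(ζ(2)² - ζ(4))/4`.
With `ζ(2)² = 5 ζ(4)/2` the total is `(3 ζ(2)² + ζ(4))/4 = 17 ζ(4)/8`.
-/

open Real Filter Topology Finset
open scoped Nat

theorem hasSum_sub_succ_of_summable {v : ℕ → ℝ} (hs : Summable fun n => v n - v (n + 1))
    (hv : Tendsto v atTop (𝓝 0)) : HasSum (fun n => v n - v (n + 1)) (v 0) := by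
  rw [hs.hasSum_iff_tendsto_nat]
  simp_rw [sum_range_sub']
  simpa using tendsto_const_nhds.sub hv

theorem summable_sub_succ_of_antitone {v : ℕ → ℝ} (hv : Antitone v) (hv0 : ∀ n, 0 ≤ v n) :
    Summable fun n => v n - v (n + 1) := by
  refine summable_of_sum_range_le (c := v 0) (fun n => sub_nonneg.2 (hv n.le_succ)) fun n => ?_
  rw [sum_range_sub']
  linarith [hv0 n]

theorem hasSum_prod_of_nonneg {α β : Type*} {f : α × β → ℝ} (hf : 0 ≤ f) {g : α → ℝ} {s : ℝ}
    (hfg : ∀ a, HasSum (fun b => f (a, b)) (g a)) (hg : HasSum g s) : HasSum f s := by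
  have hs : Summable f := (summable_prod_of_nonneg hf).2
    ⟨fun a => (hfg a).summable, by simpa only [(hfg _).tsum_eq] using hg.summable⟩
  exact (hs.hasSum.prod_fiberwise hfg).unique hg ▸ hs.hasSum

theorem hasSum_half_of_add_comp_swap {α : Type*} {g : α × α → ℝ} (hg : 0 ≤ g) {s : ℝ}
    (h : HasSum (fun x => g x + g x.swap) s) : HasSum g (s / 2) := by
  have hs : Summable g := h.summable.of_nonneg_of_le hg fun x => le_add_of_nonneg_right (hg _)
  have hswap : HasSum (fun x => g x + g x.swap) (∑' x, g x + ∑' x, g x) :=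
    hs.hasSum.add ((Equiv.prodComm α α).hasSum_iff.2 hs.hasSum)
  rw [h.unique hswap, add_self_div_two]
  exact hs.hasSum

theorem hasSum_mul_sum_range_succ {f : ℕ → ℝ} (hf : 0 ≤ f) {s t : ℝ} (hs : HasSum f s)
    (ht : HasSum (fun n => f n ^ 2) t) :
    HasSum (fun n => f n * ∑ i ∈ range (n + 1), f i) ((s * s + t) / 2) := by
  set g : ℕ × ℕ → ℝ := fun x => if x.2 ≤ x.1 then f x.1 * f x.2 else 0 with hg_def
  have hg : 0 ≤ g := fun x => by
    simp only [hg_def]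
    split_ifs
    exacts [mul_nonneg (hf _) (hf _), le_rfl]
  have hprod : HasSum (fun x : ℕ × ℕ => f x.1 * f x.2) (s * s) :=
    hs.mul hs (hs.summable.mul_of_nonneg hs.summable hf hf)
  have hdiag : HasSum (fun x : ℕ × ℕ => if x.1 = x.2 then f x.1 ^ 2 else 0) t := by
    refine (Function.Injective.hasSum_iff (g := fun n => (n, n)) (fun m n h => congrArg Prod.fst h)
      ?_).1 (by simpa [Function.comp_def] using ht)
    rintro ⟨i, j⟩ hij
    exact if_neg fun h => hij ⟨i, Prod.ext rfl h⟩
  have hsym : HasSum (fun x => g x + g x.swap) (s * s + t) := by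
    convert hprod.add hdiag using 2 with ⟨i, j⟩
    rcases lt_trichotomy i j with hij | rfl | hij
    · simp [hg_def, hij.not_ge, hij.le, hij.ne, mul_comm]
    · simp [hg_def, sq]
    · simp [hg_def, hij.not_ge, hij.le, hij.ne']
  refine (hasSum_half_of_add_comp_swap hg hsym).prod_fiberwise fun n => ?_
  rw [mul_sum]
  convert hasSum_sum_of_ne_finset_zero (s := range (n + 1)) (f := fun j => g (n, j))
    (L := SummationFilter.unconditional ℕ)
    (fun j hj => if_neg (by simpa [Nat.lt_succ_iff] using hj)) using 1
  exact sum_congr rfl fun j hj => (if_pos (Nat.lt_succ_iff.1 (mem_range.1 hj))).symm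

theorem hasSum_one_div_succ_pow {p : ℕ} (hp : p ≠ 0) {s : ℝ}
    (h : HasSum (fun n : ℕ => 1 / (n : ℝ) ^ p) s) :
    HasSum (fun n : ℕ => 1 / ((n : ℝ) + 1) ^ p) s := by
  simpa [hp] using
    (hasSum_nat_add_iff (f := fun n : ℕ => 1 / (n : ℝ) ^ p) 1).2 (by simpa [hp] using h)

namespace ConnectedSum

noncomputable def harmonicSq (N : ℕ) : ℝ := ∑ j ∈ Icc 1 N, 1 / (j : ℝ) ^ 2

theorem harmonicSq_succ (N : ℕ) :
    harmonicSq (N + 1) = harmonicSq N + 1 / ((N : ℝ) + 1) ^ 2 := by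
  rw [harmonicSq, sum_Icc_succ_top (Nat.le_add_left 1 N), harmonicSq]
  push_cast
  rfl

theorem harmonicSq_eq_sum_range (N : ℕ) :
    harmonicSq N = ∑ i ∈ range N, 1 / ((i : ℝ) + 1) ^ 2 := by
  induction N with
  | zero => simp [harmonicSq]
  | succ N ih => rw [harmonicSq_succ, ih, sum_range_succ]

theorem harmonicSq_nonneg (N : ℕ) : 0 ≤ harmonicSq N := by
  unfold harmonicSq; positivity

theorem harmonicSq_le (N : ℕ) : harmonicSq N ≤ π ^ 2 / 6 :=
  sum_le_hasSum _ (fun _ _ => by positivity) hasSum_zeta_two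

theorem hasSum_harmonicSq_succ_div_sq :
    HasSum (fun n : ℕ => harmonicSq (n + 1) / ((n : ℝ) + 1) ^ 2) (7 * π ^ 4 / 360) := by
  have h := hasSum_mul_sum_range_succ (fun n => by positivity)
    (hasSum_one_div_succ_pow two_ne_zero hasSum_zeta_two)
    (by simpa [div_pow, ← pow_mul] using hasSum_one_div_succ_pow four_ne_zero hasSum_zeta_four)
  convert h using 1
  · ext n; rw [harmonicSq_eq_sum_range]; ring
  · ring

/-- `betaNat a b = B(a + 1, b + 1)`, Euler's Beta function at positive integers. -/
noncomputable def betaNat (a b : ℕ) : ℝ := ((a ! * b ! : ℕ) : ℝ) / ((a + b + 1)! : ℕ)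

/-- `connWeight (m - 1) (n - 1) = m! n! / ((m + n)! m n)`, the weight of the connected sum. -/
noncomputable def connWeight (a b : ℕ) : ℝ := ((a ! * b ! : ℕ) : ℝ) / ((a + b + 2)! : ℕ)

theorem connWeight_nonneg (a b : ℕ) : 0 ≤ connWeight a b := by
  unfold connWeight; positivity

theorem connWeight_comm (a b : ℕ) : connWeight a b = connWeight b a := by
  rw [connWeight, connWeight, mul_comm, add_comm a b]

theorem connWeight_zero_left (b : ℕ) :
    connWeight 0 b = 1 / (((b : ℝ) + 1) * ((b : ℝ) + 2)) := by
  rw [connWeight, show 0 + b + 2 = b + 1 + 1 by ring, Nat.factorial_succ, Nat.factorial_succ]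
  push_cast
  field_simp
  ring

theorem connWeight_succ_left (a b : ℕ) :
    ((a : ℝ) + b + 3) * connWeight (a + 1) b = ((a : ℝ) + 1) * connWeight a b := by
  rw [connWeight, connWeight, show a + 1 + b + 2 = a + b + 2 + 1 by ring,
    Nat.factorial_succ (a + b + 2), Nat.factorial_succ a]
  push_cast
  field_simp
  ring

theorem betaNat_eq_mul_connWeight (a b : ℕ) :
    betaNat a b = ((a : ℝ) + b + 2) * connWeight a b := by
  rw [betaNat, connWeight, show a + b + 2 = a + b + 1 + 1 by ring, Nat.factorial_succ (a + b + 1)]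
  push_cast
  field_simp
  ring

theorem betaNat_sub_betaNat_succ (a b : ℕ) :
    betaNat a b - betaNat a (b + 1) = ((a : ℝ) + 1) * connWeight a b := by
  rw [betaNat, betaNat, connWeight, show a + (b + 1) + 1 = a + b + 1 + 1 by ring,
    show a + b + 2 = a + b + 1 + 1 by ring, Nat.factorial_succ b, Nat.factorial_succ (a + b + 1)]
  push_cast
  field_simp
  ring

theorem betaNat_zero_right (a : ℕ) : betaNat a 0 = 1 / ((a : ℝ) + 1) := by
  rw [betaNat, Nat.factorial_succ]
  push_cast [Nat.factorial_zero]
  field_simp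

theorem betaNat_nonneg (a b : ℕ) : 0 ≤ betaNat a b := by
  unfold betaNat; positivity

theorem betaNat_antitone (a : ℕ) : Antitone (betaNat a) :=
  antitone_nat_of_succ_le fun b => by
    nlinarith [betaNat_sub_betaNat_succ a b, connWeight_nonneg a b]

theorem betaNat_le (a b : ℕ) : betaNat a b ≤ a ! / ((b : ℝ) + 1) := by
  rw [betaNat, div_le_div_iff₀ (by positivity) (by positivity)]
  calc ((a ! * b ! : ℕ) : ℝ) * (b + 1) = a ! * ((b + 1)! : ℕ) := by
        push_cast [Nat.factorial_succ]; ring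
    _ ≤ a ! * ((a + b + 1)! : ℕ) := by
        gcongr
        omega

theorem tendsto_betaNat_atTop (a : ℕ) : Tendsto (betaNat a) atTop (𝓝 0) :=
  squeeze_zero (betaNat_nonneg a) (betaNat_le a) <|
    tendsto_const_nhds.div_atTop (tendsto_natCast_atTop_atTop.atTop_add tendsto_const_nhds)

theorem hasSum_connWeight (a : ℕ) : HasSum (connWeight a) (1 / ((a : ℝ) + 1) ^ 2) := by
  have h := hasSum_sub_succ_of_summable
    (summable_sub_succ_of_antitone (betaNat_antitone a) (betaNat_nonneg a))
    (tendsto_betaNat_atTop a)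
  simp only [betaNat_sub_betaNat_succ, betaNat_zero_right] at h
  rw [sq, ← div_div]
  exact (h.div_const _).congr_fun fun b => by field_simp

theorem hasSum_connWeight_div_succ (a : ℕ) :
    HasSum (fun b => connWeight a b / ((b : ℝ) + 1))
      ((π ^ 2 / 6 - harmonicSq (a + 1)) / ((a : ℝ) + 1)) := by
  induction a with
  | zero =>
    have h := (hasSum_one_div_succ_pow two_ne_zero hasSum_zeta_two).sub (hasSum_connWeight 0)
    rw [show (π ^ 2 / 6 - harmonicSq (0 + 1)) / (((0 : ℕ) : ℝ) + 1) =
        π ^ 2 / 6 - 1 / (((0 : ℕ) : ℝ) + 1) ^ 2 by simp [harmonicSq]]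
    exact h.congr_fun fun b => by rw [connWeight_zero_left]; field_simp; ring
  | succ a ih =>
    have h := ((ih.mul_left ((a : ℝ) + 1)).sub (hasSum_connWeight (a + 1))).div_const
      ((a : ℝ) + 2)
    rw [show (π ^ 2 / 6 - harmonicSq (a + 1 + 1)) / ((↑(a + 1) : ℝ) + 1) =
        (((a : ℝ) + 1) * ((π ^ 2 / 6 - harmonicSq (a + 1)) / ((a : ℝ) + 1)) -
          1 / ((↑(a + 1) : ℝ) + 1) ^ 2) / ((a : ℝ) + 2) by
      rw [harmonicSq_succ (a + 1)]; push_cast; field_simp; ring]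
    refine h.congr_fun fun b => ?_
    have := connWeight_succ_left a b
    field_simp
    linear_combination this

theorem hasSum_connWeight_div_succ_mul_succ :
    HasSum (fun x : ℕ × ℕ => connWeight x.1 x.2 / (((x.1 : ℝ) + 1) * ((x.2 : ℝ) + 1)))
      (π ^ 4 / 120) := by
  refine hasSum_prod_of_nonneg (fun x => div_nonneg (connWeight_nonneg _ _) (by positivity))
    (fun a => ((hasSum_connWeight_div_succ a).div_const ((a : ℝ) + 1)).congr_fun fun b => by
      rw [div_div, mul_comm]) ?_
  have h := ((hasSum_one_div_succ_pow two_ne_zero hasSum_zeta_two).mul_left (π ^ 2 / 6)).sub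
    hasSum_harmonicSq_succ_div_sq
  rw [show π ^ 4 / 120 = π ^ 2 / 6 * (π ^ 2 / 6) - 7 * π ^ 4 / 360 by ring]
  exact h.congr_fun fun a => by field_simp

theorem hasSum_connWeight_div_succ_mul_add :
    HasSum (fun x : ℕ × ℕ => connWeight x.1 x.2 / (((x.1 : ℝ) + 1) * ((x.1 : ℝ) + x.2 + 2)))
      (π ^ 4 / 240) := by
  rw [show π ^ 4 / 240 = π ^ 4 / 120 / 2 by ring]
  refine hasSum_half_of_add_comp_swap (fun x => div_nonneg (connWeight_nonneg _ _) (by positivity))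
    (hasSum_connWeight_div_succ_mul_succ.congr_fun fun ⟨a, b⟩ => ?_)
  simp only [Prod.swap, connWeight_comm b a]
  field_simp
  ring

theorem hasSum_connWeight_mul_harmonicSq (a : ℕ) :
    HasSum (fun b => connWeight a b * harmonicSq (a + b + 2))
      (harmonicSq (a + 1) / ((a : ℝ) + 1) ^ 2 +
        ∑' b : ℕ, connWeight a b / (((a : ℝ) + 1) * ((a : ℝ) + b + 2))) := by
  set ψ := fun b : ℕ => connWeight a b / (((a : ℝ) + 1) * ((a : ℝ) + b + 2))
  have hψ : Summable ψ := hasSum_connWeight_div_succ_mul_add.summable.prod_factor a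
  have hφ : Summable fun b => connWeight a b * harmonicSq (a + b + 2) :=
    ((hasSum_connWeight a).summable.mul_right (π ^ 2 / 6)).of_nonneg_of_le
      (fun b => mul_nonneg (connWeight_nonneg a b) (harmonicSq_nonneg _))
      (fun b => mul_le_mul_of_nonneg_left (harmonicSq_le _) (connWeight_nonneg a b))
  set v := fun b : ℕ => betaNat a b * harmonicSq (a + b + 1)
  have hv_sub : ∀ b, v b - v (b + 1) =
      ((a : ℝ) + 1) * (connWeight a b * harmonicSq (a + b + 2) - ψ b) := by
    intro b
    have hβ : betaNat a (b + 1) = betaNat a b - ((a : ℝ) + 1) * connWeight a b := by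
      linarith [betaNat_sub_betaNat_succ a b]
    simp only [v, ψ]
    rw [hβ, betaNat_eq_mul_connWeight, show a + (b + 1) + 1 = a + b + 1 + 1 by ring,
      show a + b + 2 = a + b + 1 + 1 by ring, harmonicSq_succ (a + b + 1)]
    push_cast
    field_simp
    ring
  have hv_lim : Tendsto v atTop (𝓝 0) :=
    squeeze_zero (fun b => mul_nonneg (betaNat_nonneg a b) (harmonicSq_nonneg _))
      (fun b => mul_le_mul_of_nonneg_left (harmonicSq_le _) (betaNat_nonneg a b))
      (by simpa using (tendsto_betaNat_atTop a).mul_const (π ^ 2 / 6))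
  have htel := hasSum_sub_succ_of_summable
    (by simpa only [hv_sub] using (hφ.sub hψ).mul_left ((a : ℝ) + 1)) hv_lim
  simp only [hv_sub] at htel
  rw [show harmonicSq (a + 1) / ((a : ℝ) + 1) ^ 2 = v 0 / ((a : ℝ) + 1) by
    simp only [v, betaNat_zero_right, add_zero]; field_simp]
  exact ((htel.div_const _).add hψ.hasSum).congr_fun fun b => by field_simp; ring

theorem hasSum_connWeight_mul_harmonicSq_prod :
    HasSum (fun x : ℕ × ℕ => connWeight x.1 x.2 * harmonicSq (x.1 + x.2 + 2))
      (17 * π ^ 4 / 720) := by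
  refine hasSum_prod_of_nonneg (fun x => mul_nonneg (connWeight_nonneg _ _) (harmonicSq_nonneg _))
    hasSum_connWeight_mul_harmonicSq ?_
  rw [show 17 * π ^ 4 / 720 = 7 * π ^ 4 / 360 + π ^ 4 / 240 by ring]
  exact hasSum_harmonicSq_succ_div_sq.add (hasSum_connWeight_div_succ_mul_add.prod_fiberwise
    fun a => (hasSum_connWeight_div_succ_mul_add.summable.prod_factor a).hasSum)

end ConnectedSum

open ConnectedSum in
/-- `ζ(4) = (8/17) Σ_{m,n ≥ 1} ((m−1)!(n−1)!/(m+n)!) Σ_{j=1}^{m+n} 1/j²`,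
i.e. `Z_2(1;1 | 2,1) = (17/8) ζ(4)`. -/
theorem stmt12 :
    ∑' m : ℕ+, (1 : ℝ) / (m : ℝ) ^ 4
    = (8 / 17) * ∑' mn : ℕ+ × ℕ+,
        ((((mn.1 : ℕ) - 1).factorial * ((mn.2 : ℕ) - 1).factorial : ℕ) : ℝ) /
            ((((mn.1 : ℕ) + (mn.2 : ℕ)).factorial : ℕ) : ℝ) *
          ∑ j ∈ Finset.Icc 1 ((mn.1 : ℕ) + (mn.2 : ℕ)), (1 : ℝ) / (j : ℝ) ^ 2 := by
  rw [tsum_pnat_eq_tsum_of_eq_zero (f := fun n : ℕ => 1 / (n : ℝ) ^ 4) (by simp),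
    hasSum_zeta_four.tsum_eq, ← (Equiv.pnatEquivNat.symm.prodCongr Equiv.pnatEquivNat.symm).tsum_eq]
  have h := hasSum_connWeight_mul_harmonicSq_prod.tsum_eq
  simp only [connWeight, harmonicSq] at h
  simp only [Equiv.prodCongr_apply, Prod.map, Equiv.pnatEquivNat_symm_apply, Nat.succPNat_coe,
    Nat.succ_sub_one, Nat.succ_eq_add_one, show ∀ a b : ℕ, a + 1 + (b + 1) = a + b + 2 by omega]
  rw [h]
  ring
end
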